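/- arXiv:2307.14202 — 5 statements merged into one kernel-verified Lean document; each statement's English description precedes it below -/
import Mathlib

section
/- For every s > 0, the Laplace transform of the piecewise release rate f_c(t) (equal to f_{c,1}(t) for 0 < t ≤ τ and to f_{c,2}(t) for t > τ) is ∫₀^τ e^{−s t} f_{c,1}(t) dt + ∫_τ^∞ e^{−s t} f_{c,2}(t) dt = (4 r_T² k_f μ (1 − e^{−τ s})/(N_v s)) Σ_n λ_n³ j₀(λ_n r_T)/[(2 λ_n r_T − sin(2 λ_n r_T))(D_v λ_n² + s)]. -/
/-!
With `a n = D_v λ_n²`, both pieces of `f_c` are series `∑ c n * φ n t` with `|φ n t| ≤ 1` on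
their ranges, so against the integrable weight `e^{-st}` they can be integrated termwise because
`∑ |c n| < ∞`. The window `(0, τ]` contributes
`(1 - e^{-sτ}) / s - (1 - e^{-(s + a n)τ}) / (s + a n)` per term and the tail
`(e^{-sτ} - e^{-(s + a n)τ}) / (s + a n)`; their sum collapses to
`(1 - e^{-sτ}) / s * a n / (s + a n)`, and the factor `D_v` of `a n` cancels the one in `C`.
-/

open MeasureTheory Real Set

theorem hasSum_integral_mul_tsum {α : Type*} [MeasurableSpace α] {μ : Measure α}
    {c : ℕ → ℝ} {w : α → ℝ} {F : ℕ → α → ℝ} (hc : Summable fun n => |c n|)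
    (hw : Integrable w μ) (hF : ∀ n, AEStronglyMeasurable (F n) μ)
    (hF_le : ∀ n, ∀ᵐ x ∂μ, |F n x| ≤ 1) :
    HasSum (fun n => c n * ∫ x, w x * F n x ∂μ) (∫ x, w x * ∑' n, c n * F n x ∂μ) := by
  have hwF_le : ∀ n, ∀ᵐ x ∂μ, ‖w x * F n x‖ ≤ ‖w x‖ := fun n => (hF_le n).mono fun x hx => by
    simpa [norm_mul] using mul_le_of_le_one_right (abs_nonneg (w x)) hx
  have hwF : ∀ n, Integrable (fun x => w x * F n x) μ := fun n =>
    hw.norm.mono' (hw.aestronglyMeasurable.mul (hF n)) (hwF_le n)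
  have hsum : Summable fun n => ∫ x, ‖c n * (w x * F n x)‖ ∂μ := by
    refine Summable.of_nonneg_of_le (fun n => integral_nonneg fun _ => norm_nonneg _)
      (fun n => ?_) (hc.mul_right (∫ x, ‖w x‖ ∂μ))
    rw [← Real.norm_eq_abs, ← integral_const_mul]
    refine integral_mono_ae ((hwF n).const_mul _).norm (hw.norm.const_mul _) ?_
    filter_upwards [hwF_le n] with x hx
    rw [norm_mul]
    exact mul_le_mul_of_nonneg_left hx (norm_nonneg _)
  have hasSum_terms :=
    hasSum_integral_of_summable_integral_norm (fun n => (hwF n).const_mul (c n)) hsum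
  simp only [integral_const_mul] at hasSum_terms
  have hw_tsum : (fun x => w x * ∑' n, c n * F n x) = fun x => ∑' n, c n * (w x * F n x) := by
    ext x
    rw [← tsum_mul_left]
    exact tsum_congr fun n => mul_left_comm _ _ _
  rwa [hw_tsum]

theorem integral_exp_neg_mul {k : ℝ} (hk : k ≠ 0) (a b : ℝ) :
    ∫ t in a..b, exp (-(k * t)) = (exp (-(k * a)) - exp (-(k * b))) / k := by
  have := intervalIntegral.integral_comp_mul_left (fun y => exp (-y)) hk (a := a) (b := b)
  rw [this, intervalIntegral.integral_comp_neg, integral_exp, smul_eq_mul, inv_mul_eq_div]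

theorem integral_Ioi_exp_neg_mul {k : ℝ} (hk : 0 < k) (b : ℝ) :
    ∫ t in Ioi b, exp (-(k * t)) = exp (-(k * b)) / k := by
  simpa [neg_mul, neg_div_neg_eq] using integral_exp_mul_Ioi (neg_lt_zero.2 hk) b

theorem integral_exp_neg_mul_mul_one_sub_exp {s a : ℝ} (hs : s ≠ 0) (hsa : s + a ≠ 0) (τ : ℝ) :
    ∫ t in (0 : ℝ)..τ, exp (-(s * t)) * (1 - exp (-(a * t))) =
      (1 - exp (-(s * τ))) / s - (1 - exp (-((s + a) * τ))) / (s + a) := by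
  have h : ∀ t, exp (-(s * t)) * (1 - exp (-(a * t))) = exp (-(s * t)) - exp (-((s + a) * t)) :=
    fun t => by rw [mul_one_sub, ← exp_add]; ring_nf
  simp_rw [h]
  rw [intervalIntegral.integral_sub (Continuous.intervalIntegrable (by fun_prop) _ _)
    (Continuous.intervalIntegrable (by fun_prop) _ _), integral_exp_neg_mul hs,
    integral_exp_neg_mul hsa]
  simp

theorem integral_Ioi_exp_neg_mul_mul_sub_exp {s a : ℝ} (hsa : 0 < s + a) (τ : ℝ) :
    ∫ t in Ioi τ, exp (-(s * t)) * (exp (-(a * (t - τ))) - exp (-(a * t))) =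
      (exp (-(s * τ)) - exp (-((s + a) * τ))) / (s + a) := by
  have h : ∀ t, exp (-(s * t)) * (exp (-(a * (t - τ))) - exp (-(a * t))) =
      (exp (a * τ) - 1) * exp (-((s + a) * t)) := fun t => by
    simp only [mul_sub, sub_mul, one_mul, ← exp_add]; ring_nf
  simp_rw [h]
  rw [integral_const_mul, integral_Ioi_exp_neg_mul hsa, mul_div_assoc', sub_mul, one_mul,
    ← exp_add]
  ring_nf

theorem abs_exp_neg_sub_exp_neg_le_one {x y : ℝ} (hx : 0 ≤ x) (hy : 0 ≤ y) :
    |exp (-x) - exp (-y)| ≤ 1 := by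
  rw [abs_le]
  constructor <;> linarith [exp_pos (-x), exp_pos (-y), exp_le_one_iff.2 (neg_nonpos.2 hx),
    exp_le_one_iff.2 (neg_nonpos.2 hy)]

section Release

variable {s τ : ℝ} {a c : ℕ → ℝ}

theorem hasSum_laplace_tsum_one_sub_exp (hs : 0 < s) (hτ : 0 ≤ τ) (ha : ∀ n, 0 ≤ a n)
    (hc : Summable fun n => |c n|) :
    HasSum (fun n => c n * ((1 - exp (-(s * τ))) / s - (1 - exp (-((s + a n) * τ))) / (s + a n)))
      (∫ t in (0 : ℝ)..τ, exp (-(s * t)) * ∑' n, c n * (1 - exp (-(a n * t)))) := by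
  have hker : ∀ n, ∫ t in Ioc 0 τ, exp (-(s * t)) * (1 - exp (-(a n * t))) =
      (1 - exp (-(s * τ))) / s - (1 - exp (-((s + a n) * τ))) / (s + a n) := fun n => by
    rw [← intervalIntegral.integral_of_le hτ,
      integral_exp_neg_mul_mul_one_sub_exp hs.ne' (add_pos_of_pos_of_nonneg hs (ha n)).ne']
  have hasSum_terms := hasSum_integral_mul_tsum (μ := volume.restrict (Ioc 0 τ))
    (w := fun t => exp (-(s * t))) (F := fun n t => 1 - exp (-(a n * t))) hc
    (Continuous.integrableOn_Ioc (by fun_prop))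
    (fun n => Continuous.aestronglyMeasurable (by fun_prop))
    (fun n => ae_restrict_of_forall_mem measurableSet_Ioc fun t ht => by
      simpa using abs_exp_neg_sub_exp_neg_le_one le_rfl (mul_nonneg (ha n) ht.1.le))
  rw [intervalIntegral.integral_of_le hτ]
  simpa only [hker] using hasSum_terms

theorem hasSum_laplace_Ioi_tsum_sub_exp (hs : 0 < s) (hτ : 0 ≤ τ) (ha : ∀ n, 0 ≤ a n)
    (hc : Summable fun n => |c n|) :
    HasSum (fun n => c n * ((exp (-(s * τ)) - exp (-((s + a n) * τ))) / (s + a n)))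
      (∫ t in Ioi τ, exp (-(s * t)) *
        ∑' n, c n * (exp (-(a n * (t - τ))) - exp (-(a n * t)))) := by
  have hasSum_terms := hasSum_integral_mul_tsum (μ := volume.restrict (Ioi τ))
    (w := fun t => exp (-(s * t))) (F := fun n t => exp (-(a n * (t - τ))) - exp (-(a n * t))) hc
    (by simpa only [neg_mul, IntegrableOn] using exp_neg_integrableOn_Ioi τ hs)
    (fun n => Continuous.aestronglyMeasurable (by fun_prop))
    (fun n => ae_restrict_of_forall_mem measurableSet_Ioi fun t ht =>
      abs_exp_neg_sub_exp_neg_le_one (mul_nonneg (ha n) (sub_nonneg.2 (le_of_lt ht)))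
        (mul_nonneg (ha n) (hτ.trans (le_of_lt ht))))
  simpa only [integral_Ioi_exp_neg_mul_mul_sub_exp (add_pos_of_pos_of_nonneg hs (ha _))]
    using hasSum_terms

theorem hasSum_laplace_release (hs : 0 < s) (hτ : 0 ≤ τ) (ha : ∀ n, 0 ≤ a n)
    (hc : Summable fun n => |c n|) :
    HasSum (fun n => c n * a n / (s + a n) * ((1 - exp (-(s * τ))) / s))
      ((∫ t in (0 : ℝ)..τ, exp (-(s * t)) * ∑' n, c n * (1 - exp (-(a n * t)))) +
        ∫ t in Ioi τ, exp (-(s * t)) *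
          ∑' n, c n * (exp (-(a n * (t - τ))) - exp (-(a n * t)))) := by
  convert (hasSum_laplace_tsum_one_sub_exp hs hτ ha hc).add
    (hasSum_laplace_Ioi_tsum_sub_exp hs hτ ha hc) using 1
  ext n
  have hsa : s + a n ≠ 0 := (add_pos_of_pos_of_nonneg hs (ha n)).ne'
  field_simp
  ring

end Release

theorem stmt_3_general
    (rT kf μ Nv Dv : ℝ)
    (hμ : 0 < μ) (hNv : 0 < Nv) (hDv : 0 < Dv)
    (τ : ℝ) (hτ : τ = Nv / μ)
    (C : ℝ) (hCdef : C = 4 * rT ^ 2 * kf * μ / (Nv * Dv))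
    (lam : ℕ → ℝ)
    (c : ℕ → ℝ)
    (hc : ∀ n, c n = lam n * (Real.sin (lam n * rT) / (lam n * rT)) /
          (2 * lam n * rT - Real.sin (2 * lam n * rT)))
    (hsum : Summable fun n => |c n|)
    (fc1 : ℝ → ℝ)
    (hfc1 : ∀ t, fc1 t = C * ∑' n, c n * (1 - Real.exp (-(Dv * lam n ^ 2 * t))))
    (fc2 : ℝ → ℝ)
    (hfc2 : ∀ t, fc2 t = C * ∑' n, c n *
          (Real.exp (-(Dv * lam n ^ 2 * (t - τ))) - Real.exp (-(Dv * lam n ^ 2 * t))))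
    (s : ℝ) (hs : 0 < s) :
    (∫ t in (0:ℝ)..τ, Real.exp (-(s * t)) * fc1 t) +
      (∫ t in Set.Ioi τ, Real.exp (-(s * t)) * fc2 t) =
    4 * rT ^ 2 * kf * μ * (1 - Real.exp (-(τ * s))) / (Nv * s) *
      ∑' n, lam n ^ 3 * (Real.sin (lam n * rT) / (lam n * rT)) /
        ((2 * lam n * rT - Real.sin (2 * lam n * rT)) * (Dv * lam n ^ 2 + s)) := by
  have hτ0 : 0 ≤ τ := hτ ▸ by positivity
  have hCc : Summable fun n => |C * c n| := by simpa only [abs_mul] using hsum.mul_left |C|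
  have hfc1' : ∀ t, fc1 t = ∑' n, C * c n * (1 - exp (-(Dv * lam n ^ 2 * t))) := fun t => by
    rw [hfc1, ← tsum_mul_left]; simp only [mul_assoc]
  have hfc2' : ∀ t, fc2 t = ∑' n, C * c n *
      (exp (-(Dv * lam n ^ 2 * (t - τ))) - exp (-(Dv * lam n ^ 2 * t))) := fun t => by
    rw [hfc2, ← tsum_mul_left]; simp only [mul_assoc]
  simp only [hfc1', hfc2']
  rw [← (hasSum_laplace_release hs hτ0 (fun n => by positivity) hCc).tsum_eq, ← tsum_mul_left]
  refine tsum_congr fun n => ?_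
  have hsa : s + Dv * lam n ^ 2 ≠ 0 := by positivity
  rw [hc, hCdef, mul_comm τ s]
  field_simp
  ring

theorem stmt_3
    (rT kf μ Nv Dv : ℝ)
    (hrT : 0 < rT) (hkf : 0 < kf) (hμ : 0 < μ) (hNv : 0 < Nv) (hDv : 0 < Dv)
    (τ : ℝ) (hτ : τ = Nv / μ)
    (C : ℝ) (hCdef : C = 4 * rT ^ 2 * kf * μ / (Nv * Dv))
    (lam : ℕ → ℝ) (hlam : ∀ n, 0 < lam n)
    (hne : ∀ n, 2 * lam n * rT ≠ Real.sin (2 * lam n * rT))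
    (c : ℕ → ℝ)
    (hc : ∀ n, c n = lam n * (Real.sin (lam n * rT) / (lam n * rT)) /
          (2 * lam n * rT - Real.sin (2 * lam n * rT)))
    (hsum : Summable fun n => |c n|)
    (fc1 : ℝ → ℝ)
    (hfc1 : ∀ t, fc1 t = C * ∑' n, c n * (1 - Real.exp (-(Dv * lam n ^ 2 * t))))
    (fc2 : ℝ → ℝ)
    (hfc2 : ∀ t, fc2 t = C * ∑' n, c n *
          (Real.exp (-(Dv * lam n ^ 2 * (t - τ))) - Real.exp (-(Dv * lam n ^ 2 * t))))
    (s : ℝ) (hs : 0 < s) :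
    (∫ t in (0:ℝ)..τ, Real.exp (-(s * t)) * fc1 t) +
      (∫ t in Set.Ioi τ, Real.exp (-(s * t)) * fc2 t) =
    4 * rT ^ 2 * kf * μ * (1 - Real.exp (-(τ * s))) / (Nv * s) *
      ∑' n, lam n ^ 3 * (Real.sin (lam n * rT) / (lam n * rT)) /
        ((2 * lam n * rT - Real.sin (2 * lam n * rT)) * (Dv * lam n ^ 2 + s)) :=
  stmt_3_general rT kf μ Nv Dv hμ hNv hDv τ hτ C hCdef lam c hc hsum fc1 hfc1 fc2 hfc2 s hs
end

section
/- For every s > max(0, ζ) with s ≠ ζ, the Laplace transform of H satisfies ∫₀^∞ e^{−s t} H(t) dt = w/(s √(D_σ (k_d + s))) − w γ (√(s + k_d) − γ √D_σ)/(√(s + k_d) (s − ζ) ζ) − (w γ²/(ζ s)) √(D_σ/(k_d + s)) + w γ/(ζ s). (Equation (36) of Appendix B, the Laplace transform 𝓗(s) of the absorption fraction H(t).) -/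
open MeasureTheory Filter Topology

noncomputable def erf (x : ℝ) : ℝ := (2 / Real.sqrt Real.pi) * ∫ u in (0:ℝ)..x, Real.exp (-u ^ 2)

noncomputable def erfc (x : ℝ) : ℝ := 1 - erf x

/-! `H` is a linear combination of `erf (√kd * √t)`, `exp (ζ t) * erfc (γ √Dσ * √t)` and a
constant. Multiplying by `exp (ζ t)` shifts the Laplace variable from `s` to `s - ζ`, so all
transforms reduce to `∫₀^∞ exp (-p t) erf (c √t) dt = c / (p √(p + c²))`, and
`(s - ζ) + γ² Dσ = s + kd` brings the shifted term back to `√(s + kd)`. -/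

open Real Set

theorem hasDerivAt_erf (x : ℝ) : HasDerivAt erf (2 / √π * exp (-x ^ 2)) x := by
  have hc : Continuous fun u : ℝ => exp (-u ^ 2) := by fun_prop
  exact (intervalIntegral.integral_hasDerivAt_right (hc.intervalIntegrable 0 x)
    hc.stronglyMeasurable.stronglyMeasurableAtFilter hc.continuousAt).const_mul _

@[fun_prop]
theorem continuous_erf : Continuous erf :=
  continuous_iff_continuousAt.mpr fun x => (hasDerivAt_erf x).continuousAt

@[simp] theorem erf_zero : erf 0 = 0 := by simp [erf]

theorem integral_exp_neg_sq_Ioi : ∫ u in Ioi (0:ℝ), exp (-u ^ 2) = √π / 2 := by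
  simpa using integral_gaussian_Ioi 1

theorem integrableOn_exp_neg_sq_Ioi : IntegrableOn (fun u : ℝ => exp (-u ^ 2)) (Ioi 0) := by
  simpa using (integrable_exp_neg_mul_sq one_pos).integrableOn (s := Ioi 0)

theorem tendsto_erf_atTop : Tendsto erf atTop (𝓝 1) := by
  have h := (intervalIntegral_tendsto_integral_Ioi 0 integrableOn_exp_neg_sq_Ioi
    tendsto_id).const_mul (2 / √π)
  rwa [integral_exp_neg_sq_Ioi, div_mul_div_cancel₀' two_ne_zero,
    div_self (sqrt_pos.mpr pi_pos).ne'] at h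

theorem erf_nonneg {x : ℝ} (hx : 0 ≤ x) : 0 ≤ erf x :=
  mul_nonneg (by positivity) (intervalIntegral.integral_nonneg hx fun u _ => (exp_pos _).le)

theorem erf_le_one {x : ℝ} (hx : 0 ≤ x) : erf x ≤ 1 := by
  have h : ∫ u in (0:ℝ)..x, exp (-u ^ 2) ≤ √π / 2 := by
    rw [intervalIntegral.integral_of_le hx, ← integral_exp_neg_sq_Ioi]
    exact setIntegral_mono_set integrableOn_exp_neg_sq_Ioi
      (.of_forall fun u => (exp_pos _).le) Ioc_subset_Ioi_self.eventuallyLE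
  calc erf x ≤ 2 / √π * (√π / 2) := mul_le_mul_of_nonneg_left h (by positivity)
    _ = 1 := by field_simp

theorem hasDerivAt_erf_mul_sqrt (c : ℝ) {t : ℝ} (ht : 0 < t) :
    HasDerivAt (fun t => erf (c * √t)) (2 / √π * exp (-(c ^ 2 * t)) * (c / (2 * √t))) t := by
  have h := (hasDerivAt_erf (c * √t)).comp t ((hasDerivAt_sqrt ht.ne').const_mul c)
  rw [mul_pow, sq_sqrt ht.le, mul_one_div] at h
  exact h

theorem hasDerivAt_exp_neg_mul (p t : ℝ) :
    HasDerivAt (fun t => exp (-(p * t))) (-p * exp (-(p * t))) t := by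
  simpa [mul_comm] using ((hasDerivAt_id t).const_mul p).neg.exp

theorem tendsto_exp_neg_mul_atTop {p : ℝ} (hp : 0 < p) :
    Tendsto (fun t => exp (-(p * t))) atTop (𝓝 0) :=
  tendsto_exp_atBot.comp (tendsto_neg_atTop_atBot.comp (tendsto_id.const_mul_atTop hp))

section Laplace

variable {p c : ℝ}

theorem integrableOn_exp_neg_mul_Ioi (hp : 0 < p) :
    IntegrableOn (fun t => exp (-(p * t))) (Ioi 0) := by
  simpa only [neg_mul] using integrableOn_exp_mul_Ioi (neg_neg_of_pos hp) 0

theorem integral_exp_neg_mul_Ioi (hp : 0 < p) : ∫ t in Ioi 0, exp (-(p * t)) = 1 / p := by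
  simp_rw [← neg_mul]
  rw [integral_exp_mul_Ioi (neg_neg_of_pos hp)]
  field_simp
  simp

theorem integrableOn_exp_neg_mul_mul_erf (hp : 0 < p) (hc : 0 ≤ c) :
    IntegrableOn (fun t => exp (-(p * t)) * erf (c * √t)) (Ioi 0) := by
  refine Integrable.mono (integrableOn_exp_neg_mul_Ioi hp)
    (by fun_prop : Continuous _).aestronglyMeasurable (.of_forall fun t => ?_)
  have hct : 0 ≤ c * √t := by positivity
  rw [norm_mul, norm_of_nonneg (exp_pos _).le, norm_of_nonneg (erf_nonneg hct)]
  exact mul_le_of_le_one_right (exp_pos _).le (erf_le_one hct)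

/-- The antiderivative is `-exp (-p t) erf (c √t) / p + c / (p √(p + c²)) erf (√(p + c²) √t)`:
the derivative of the second term cancels the one of `erf` in the first, since
`exp (-p t) exp (-c² t) = exp (-(p + c²) t)`. -/
theorem integral_exp_neg_mul_mul_erf (hp : 0 < p) (hc : 0 < c) :
    ∫ t in Ioi 0, exp (-(p * t)) * erf (c * √t) = c / (p * √(p + c ^ 2)) := by
  set q := p + c ^ 2
  have hq : 0 < q := by positivity
  set G : ℝ → ℝ := fun t => -(exp (-(p * t)) * erf (c * √t)) / p + c / (p * √q) * erf (√q * √t)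
  have hG : ∀ t ∈ Ioi (0:ℝ), HasDerivAt G (exp (-(p * t)) * erf (c * √t)) t := by
    intro t (ht : 0 < t)
    have h₂ := hasDerivAt_erf_mul_sqrt (√q) ht
    rw [sq_sqrt hq.le] at h₂
    refine ((((hasDerivAt_exp_neg_mul p t).mul (hasDerivAt_erf_mul_sqrt c ht)).neg.div_const
      p).add (h₂.const_mul _)).congr_deriv ?_
    have hexp : exp (-(q * t)) = exp (-(p * t)) * exp (-(c ^ 2 * t)) := by
      simp only [q]; rw [← exp_add]; ring_nf
    have : 0 < √t := sqrt_pos.mpr ht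
    rw [hexp]
    field_simp
    ring
  have hlim : Tendsto G atTop (𝓝 (c / (p * √q))) := by
    have h₁ := tendsto_erf_atTop.comp (tendsto_sqrt_atTop.const_mul_atTop hc)
    have h₂ := tendsto_erf_atTop.comp (tendsto_sqrt_atTop.const_mul_atTop (sqrt_pos.mpr hq))
    simpa using (((tendsto_exp_neg_mul_atTop hp).mul h₁).neg.div_const p).add (h₂.const_mul _)
  have hcont : ContinuousWithinAt G (Ici 0) 0 :=
    (by fun_prop : Continuous G).continuousWithinAt
  rw [integral_Ioi_of_hasDerivAt_of_tendsto hcont hG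
    (integrableOn_exp_neg_mul_mul_erf hp hc.le) hlim]
  simp [G]

theorem integrableOn_exp_neg_mul_mul_erfc (hp : 0 < p) (hc : 0 ≤ c) :
    IntegrableOn (fun t => exp (-(p * t)) * erfc (c * √t)) (Ioi 0) := by
  simp_rw [erfc, mul_sub, mul_one]
  exact (integrableOn_exp_neg_mul_Ioi hp).sub (integrableOn_exp_neg_mul_mul_erf hp hc)

theorem integral_exp_neg_mul_mul_erfc (hp : 0 < p) (hc : 0 < c) :
    ∫ t in Ioi 0, exp (-(p * t)) * erfc (c * √t) = 1 / p - c / (p * √(p + c ^ 2)) := by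
  simp_rw [erfc, mul_sub, mul_one]
  rw [integral_sub (integrableOn_exp_neg_mul_Ioi hp) (integrableOn_exp_neg_mul_mul_erf hp hc.le),
    integral_exp_neg_mul_Ioi hp, integral_exp_neg_mul_mul_erf hp hc]

end Laplace

theorem stmt_6_general
    (Dσ kd γ w : ℝ) (hDσ : 0 < Dσ) (hkd : 0 < kd) (hγ : 0 < γ)
    (ζ : ℝ) (hζdef : ζ = γ ^ 2 * Dσ - kd) (hζ : ζ ≠ 0)
    (H : ℝ → ℝ)
    (hH : ∀ t, 0 < t → H t = w / Real.sqrt (kd * Dσ) * erf (Real.sqrt (kd * t)) -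
          w * γ / ζ * (Real.exp (ζ * t) * erfc (γ * Real.sqrt (Dσ * t)) +
            γ * Real.sqrt (Dσ / kd) * erf (Real.sqrt (kd * t)) - 1))
    (s : ℝ) (hs : max 0 ζ < s) :
    ∫ t in Set.Ioi (0:ℝ), Real.exp (-(s * t)) * H t =
      w / (s * Real.sqrt (Dσ * (kd + s))) -
        w * γ * (Real.sqrt (s + kd) - γ * Real.sqrt Dσ) / (Real.sqrt (s + kd) * (s - ζ) * ζ) -
        w * γ ^ 2 / (ζ * s) * Real.sqrt (Dσ / (kd + s)) + w * γ / (ζ * s) := by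
  obtain ⟨hs0, hsζ⟩ := max_lt_iff.mp hs
  have hp : 0 < s - ζ := sub_pos.mpr hsζ
  have hk : 0 < √kd := sqrt_pos.mpr hkd
  set b := γ * √Dσ
  have hb : 0 < b := by positivity
  set A := w / √(kd * Dσ) - w * γ / ζ * (γ * √(Dσ / kd))
  set C := w * γ / ζ
  have hdecomp : EqOn (fun t => exp (-(s * t)) * H t)
      (fun t => A * (exp (-(s * t)) * erf (√kd * √t)) -
        C * (exp (-((s - ζ) * t)) * erfc (b * √t)) + C * exp (-(s * t))) (Ioi 0) := by
    intro t (ht : 0 < t)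
    have hshift : exp (-(s * t)) * exp (ζ * t) = exp (-((s - ζ) * t)) := by
      rw [← exp_add]; ring_nf
    beta_reduce
    rw [hH t ht, sqrt_mul hkd.le t, sqrt_mul hDσ.le t, ← hshift]
    simp only [A, b, C]
    ring_nf
  have hsum : s - ζ + b ^ 2 = s + kd := by rw [mul_pow, sq_sqrt hDσ.le, hζdef]; ring
  have hA := (integrableOn_exp_neg_mul_mul_erf hs0 hk.le).const_mul A
  have hE := (integrableOn_exp_neg_mul_mul_erfc hp hb.le).const_mul C
  rw [setIntegral_congr_fun measurableSet_Ioi hdecomp,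
    integral_add (hA.sub hE : Integrable (fun t => _ - _) _)
      ((integrableOn_exp_neg_mul_Ioi hs0).const_mul C), integral_sub hA hE,
    integral_const_mul, integral_const_mul, integral_const_mul,
    integral_exp_neg_mul_mul_erf hs0 hk, integral_exp_neg_mul_mul_erfc hp hb,
    integral_exp_neg_mul_Ioi hs0, hsum, sq_sqrt hkd.le]
  simp only [A, C, b, sqrt_mul hkd.le, sqrt_mul hDσ.le, sqrt_div hDσ.le, add_comm kd s]
  have : 0 < √(s + kd) := sqrt_pos.mpr (by positivity)
  have : 0 < √Dσ := sqrt_pos.mpr hDσ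
  field_simp
  ring

theorem stmt_6
    (Dσ kd γ w : ℝ) (hDσ : 0 < Dσ) (hkd : 0 < kd) (hγ : 0 < γ)
    (ζ : ℝ) (hζdef : ζ = γ ^ 2 * Dσ - kd) (hζ : ζ ≠ 0)
    (H : ℝ → ℝ)
    (hH : ∀ t, 0 < t → H t = w / Real.sqrt (kd * Dσ) * erf (Real.sqrt (kd * t)) -
          w * γ / ζ * (Real.exp (ζ * t) * erfc (γ * Real.sqrt (Dσ * t)) +
            γ * Real.sqrt (Dσ / kd) * erf (Real.sqrt (kd * t)) - 1))
    (s : ℝ) (hs : max 0 ζ < s) (hsζ : s ≠ ζ) :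
    ∫ t in Set.Ioi (0:ℝ), Real.exp (-(s * t)) * H t =
      w / (s * Real.sqrt (Dσ * (kd + s))) -
        w * γ * (Real.sqrt (s + kd) - γ * Real.sqrt Dσ) / (Real.sqrt (s + kd) * (s - ζ) * ζ) -
        w * γ ^ 2 / (ζ * s) * Real.sqrt (Dσ / (kd + s)) + w * γ / (ζ * s) :=
  stmt_6_general Dσ kd γ w hDσ hkd hγ ζ hζdef hζ H hH s hs
end

section
/- Let f : (0,∞) → ℝ be Lebesgue integrable with ∫₀^∞ f(u) du = A, and let h : (0,∞) → ℝ be measurable and bounded with lim_{t→∞} h(t) = L. Then the finite convolution converges: lim_{t→∞} ∫₀^t f(u) h(t − u) du = A · L. (Final-value principle for finite convolutions, the analytic content of the final-value-theorem step used in the proofs of Corollary 1 and Theorem 4.) -/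
open MeasureTheory Filter Topology Set

/-! Extend the integrand `f u * h (t - u)` by zero outside `(0, t)`. As `t → ∞` it converges
pointwise to `f u * L` on `(0, ∞)` and is dominated by `M * |f u|`, so dominated convergence
gives the limit `(∫ f) * L`. -/

lemma intervalIntegral_eq_integral_Ioi_indicator_Ioo {g : ℝ → ℝ} {t : ℝ} (ht : 0 ≤ t) :
    ∫ u in (0:ℝ)..t, g u = ∫ u in Ioi (0:ℝ), (Ioo 0 t).indicator g u := by
  rw [integral_indicator measurableSet_Ioo, Measure.restrict_restrict measurableSet_Ioo,
    inter_eq_left.2 Ioo_subset_Ioi_self, intervalIntegral.integral_of_le ht,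
    integral_Ioc_eq_integral_Ioo]

section Convolution

variable {f h : ℝ → ℝ} {L M : ℝ}

lemma norm_indicator_Ioo_mul_sub_le (hM : ∀ u, 0 < u → |h u| ≤ M) (t u : ℝ) :
    ‖(Ioo 0 t).indicator (fun u => f u * h (t - u)) u‖ ≤ M * |f u| := by
  have hM0 : 0 ≤ M := (abs_nonneg _).trans (hM 1 one_pos)
  by_cases hu : u ∈ Ioo 0 t
  · rw [indicator_of_mem hu, Real.norm_eq_abs, abs_mul, mul_comm]
    exact mul_le_mul_of_nonneg_right (hM _ (sub_pos.2 hu.2)) (abs_nonneg _)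
  · rw [indicator_of_notMem hu, norm_zero]
    positivity

lemma tendsto_indicator_Ioo_mul_sub (hL : Tendsto h atTop (𝓝 L)) {u : ℝ} (hu : 0 < u) :
    Tendsto (fun t => (Ioo 0 t).indicator (fun u => f u * h (t - u)) u) atTop
      (𝓝 (f u * L)) := by
  have hshift : Tendsto (fun t => f u * h (t - u)) atTop (𝓝 (f u * L)) :=
    tendsto_const_nhds.mul (hL.comp (tendsto_atTop_add_const_right atTop (-u) tendsto_id))
  refine hshift.congr' ?_
  filter_upwards [eventually_gt_atTop u] with t ht
  exact (indicator_of_mem (mem_Ioo.2 ⟨hu, ht⟩) (fun u => f u * h (t - u))).symm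

lemma tendsto_integral_indicator_Ioo_mul_sub (hf : IntegrableOn f (Ioi 0))
    (hmeas : Measurable h) (hM : ∀ u, 0 < u → |h u| ≤ M) (hL : Tendsto h atTop (𝓝 L)) :
    Tendsto (fun t => ∫ u in Ioi (0:ℝ), (Ioo 0 t).indicator (fun u => f u * h (t - u)) u)
      atTop (𝓝 ((∫ u in Ioi (0:ℝ), f u) * L)) := by
  rw [← integral_mul_const]
  refine tendsto_integral_filter_of_dominated_convergence (fun u => M * |f u|) ?_ ?_
    (hf.norm.const_mul M) ?_
  · refine .of_forall fun t => ?_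
    exact (hf.1.mul (hmeas.comp (measurable_const.sub measurable_id)).aestronglyMeasurable)
      |>.indicator measurableSet_Ioo
  · exact .of_forall fun t => .of_forall (norm_indicator_Ioo_mul_sub_le hM t)
  · rw [ae_restrict_iff' measurableSet_Ioi]
    exact .of_forall fun u hu => tendsto_indicator_Ioo_mul_sub hL hu

end Convolution

theorem stmt_9 (f h : ℝ → ℝ) (A L M : ℝ)
    (hf : IntegrableOn f (Set.Ioi 0))
    (hA : ∫ u in Set.Ioi (0:ℝ), f u = A)
    (hmeas : Measurable h)
    (hM : ∀ u, 0 < u → |h u| ≤ M)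
    (hL : Tendsto h atTop (𝓝 L)) :
    Tendsto (fun t => ∫ u in (0:ℝ)..t, f u * h (t - u)) atTop (𝓝 (A * L)) := by
  rw [← hA]
  refine (tendsto_integral_indicator_Ioo_mul_sub hf hmeas hM hL).congr' ?_
  filter_upwards [eventually_ge_atTop 0] with t ht
  exact (intervalIntegral_eq_integral_Ioi_indicator_Ioo ht).symm
end

section
/- The series f_{c,1} and f_{c,2} may be differentiated term by term: for every t with 0 < t < τ, f_{c,1} is differentiable at t with derivative (4 r_T² k_f μ/N_v) Σ_n c_n λ_n² exp(−D_v λ_n² t); and for every t > τ, f_{c,2} is differentiable at t with derivative (4 r_T² k_f μ/N_v) Σ_n c_n λ_n² (exp(−D_v λ_n² t) − exp(−D_v λ_n² (t−τ))). (Derivation of the release-rate derivative f_{c,d} in Corollary 3, Eq. (12).) -/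
/-!
Each term `c n * exp (-(a n * t))` with `a n ≥ 0` has derivative `-(c n * a n * exp (-(a n * t)))`,
and since `a * exp (-(a * s)) ≤ 1 / s` for every `a`, these derivatives are bounded by `|c n| / s`
uniformly for `t > s > 0`. As `∑ |c n| < ∞`, the series may be differentiated term by term on
`t > 0`; `f_{c,1}` and `f_{c,2}` are affine combinations of this series and of its shift by `τ`.
-/

open MeasureTheory Filter Topology

namespace Real

lemma mul_exp_neg_mul_le_inv (a : ℝ) {s : ℝ} (hs : 0 < s) : a * exp (-(a * s)) ≤ s⁻¹ := by
  have hmax : a * s * exp (-(a * s)) ≤ 1 :=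
    (mul_exp_neg_le_exp_neg_one (a * s)).trans (exp_le_one_iff.mpr (by norm_num))
  calc a * exp (-(a * s)) = a * s * exp (-(a * s)) * s⁻¹ := by field_simp
    _ ≤ s⁻¹ := mul_le_of_le_one_left (inv_nonneg.mpr hs.le) hmax

lemma norm_mul_mul_exp_neg_mul_le {c a s t : ℝ} (ha : 0 ≤ a) (hs : 0 < s) (hst : s ≤ t) :
    ‖c * a * exp (-(a * t))‖ ≤ |c| * s⁻¹ := by
  rw [norm_mul, norm_mul, Real.norm_eq_abs, norm_of_nonneg ha, norm_of_nonneg (exp_nonneg _),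
    mul_assoc]
  gcongr
  exact (mul_exp_neg_mul_le_inv a (hs.trans_le hst)).trans (inv_anti₀ hs hst)

variable {ι : Type*} {c a : ι → ℝ}

lemma summable_mul_exp_neg_mul (hc : Summable c) (ha : ∀ i, 0 ≤ a i) {t : ℝ} (ht : 0 ≤ t) :
    Summable fun i => c i * exp (-(a i * t)) := by
  refine hc.abs.of_norm_bounded fun i => ?_
  rw [norm_mul, Real.norm_eq_abs, norm_of_nonneg (exp_nonneg _)]
  exact mul_le_of_le_one_right (abs_nonneg _)
    (exp_le_one_iff.mpr (neg_nonpos.mpr (mul_nonneg (ha i) ht)))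

lemma summable_mul_mul_exp_neg_mul (hc : Summable c) (ha : ∀ i, 0 ≤ a i) {t : ℝ} (ht : 0 < t) :
    Summable fun i => c i * a i * exp (-(a i * t)) :=
  (hc.abs.mul_right t⁻¹).of_norm_bounded fun i => norm_mul_mul_exp_neg_mul_le (ha i) ht le_rfl

theorem hasDerivAt_tsum_mul_exp_neg_mul (hc : Summable c) (ha : ∀ i, 0 ≤ a i) {t : ℝ}
    (ht : 0 < t) :
    HasDerivAt (fun t => ∑' i, c i * exp (-(a i * t))) (-∑' i, c i * a i * exp (-(a i * t))) t := by
  have hterm (i : ι) (y : ℝ) :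
      HasDerivAt (fun t => c i * exp (-(a i * t))) (-(c i * a i * exp (-(a i * y)))) y := by
    refine ((((hasDerivAt_id' y).const_mul (a i)).neg.exp).const_mul (c i)).congr_deriv ?_
    simp only [Pi.neg_apply]
    ring
  have ht2 : t ∈ Set.Ioi (t / 2) := half_lt_self ht
  rw [← tsum_neg]
  refine hasDerivAt_tsum_of_isPreconnected (hc.abs.mul_right (t / 2)⁻¹) isOpen_Ioi
    isPreconnected_Ioi (fun i y _ => hterm i y) (fun i y hy => ?_) ht2
    (summable_mul_exp_neg_mul hc ha ht.le) ht2
  rw [norm_neg]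
  exact norm_mul_mul_exp_neg_mul_le (ha i) (half_pos ht) hy.le

end Real

theorem stmt_11_general
    (rT kf μ Nv Dv : ℝ)
    (hμ : 0 < μ) (hNv : 0 < Nv) (hDv : 0 < Dv)
    (τ : ℝ) (hτ : τ = Nv / μ)
    (C : ℝ) (hCdef : C = 4 * rT ^ 2 * kf * μ / (Nv * Dv))
    (lam : ℕ → ℝ)
    (c : ℕ → ℝ)
    (hsum : Summable fun n => |c n|)
    (fc1 : ℝ → ℝ)
    (hfc1 : ∀ t, fc1 t = C * ∑' n, c n * (1 - Real.exp (-(Dv * lam n ^ 2 * t))))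
    (fc2 : ℝ → ℝ)
    (hfc2 : ∀ t, fc2 t = C * ∑' n, c n *
          (Real.exp (-(Dv * lam n ^ 2 * (t - τ))) - Real.exp (-(Dv * lam n ^ 2 * t))))
    :
    (∀ t, 0 < t → t < τ → HasDerivAt fc1
        (4 * rT ^ 2 * kf * μ / Nv * ∑' n, c n * lam n ^ 2 * Real.exp (-(Dv * lam n ^ 2 * t))) t) ∧
    (∀ t, τ < t → HasDerivAt fc2
        (4 * rT ^ 2 * kf * μ / Nv * ∑' n, c n * lam n ^ 2 *
          (Real.exp (-(Dv * lam n ^ 2 * t)) - Real.exp (-(Dv * lam n ^ 2 * (t - τ))))) t) := by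
  have hc : Summable c := hsum.of_abs
  have ha (n : ℕ) : 0 ≤ Dv * lam n ^ 2 := by positivity
  have hτ0 : 0 < τ := hτ ▸ div_pos hNv hμ
  set F : ℝ → ℝ := fun t => ∑' n, c n * Real.exp (-(Dv * lam n ^ 2 * t))
  have hF {t : ℝ} (ht : 0 < t) := Real.hasDerivAt_tsum_mul_exp_neg_mul hc ha ht
  have hFsum {t : ℝ} (ht : 0 ≤ t) := Real.summable_mul_exp_neg_mul hc ha ht
  have hscale (g : ℕ → ℝ) : C * ∑' n, c n * (Dv * lam n ^ 2) * g n =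
      4 * rT ^ 2 * kf * μ / Nv * ∑' n, c n * lam n ^ 2 * g n := by
    rw [← tsum_mul_left, ← tsum_mul_left]
    refine tsum_congr fun n => ?_
    rw [hCdef]
    field_simp
  refine ⟨fun t ht0 _ => ?_, fun t htτ => ?_⟩
  · have hfc1_eq : fc1 =ᶠ[𝓝 t] fun y => C * (∑' n, c n - F y) := by
      filter_upwards [Ioi_mem_nhds ht0] with y hy
      rw [hfc1, ← hc.tsum_sub (hFsum hy.le)]
      simp only [mul_sub, mul_one]
    refine (((hasDerivAt_const t _).sub (hF ht0)).const_mul C).congr_of_eventuallyEq hfc1_eq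
      |>.congr_deriv ?_
    rw [zero_sub, neg_neg, ← hscale]
  · have ht0 : 0 < t := hτ0.trans htτ
    have htτ' : 0 < t - τ := sub_pos.mpr htτ
    have hfc2_eq : fc2 =ᶠ[𝓝 t] fun y => C * (F (y - τ) - F y) := by
      filter_upwards [Ioi_mem_nhds htτ] with y hy
      rw [hfc2, ← (hFsum (sub_pos.mpr hy).le).tsum_sub (hFsum (hτ0.trans hy).le)]
      simp only [mul_sub]
    refine ((((hF htτ').comp_sub_const t τ).sub (hF ht0)).const_mul C).congr_of_eventuallyEq
      hfc2_eq |>.congr_deriv ?_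
    rw [neg_sub_neg, ← (Real.summable_mul_mul_exp_neg_mul hc ha ht0).tsum_sub
      (Real.summable_mul_mul_exp_neg_mul hc ha htτ'), ← hscale]
    simp only [mul_sub]

theorem stmt_11
    (rT kf μ Nv Dv : ℝ)
    (hrT : 0 < rT) (hkf : 0 < kf) (hμ : 0 < μ) (hNv : 0 < Nv) (hDv : 0 < Dv)
    (τ : ℝ) (hτ : τ = Nv / μ)
    (C : ℝ) (hCdef : C = 4 * rT ^ 2 * kf * μ / (Nv * Dv))
    (lam : ℕ → ℝ) (hlam : ∀ n, 0 < lam n)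
    (hne : ∀ n, 2 * lam n * rT ≠ Real.sin (2 * lam n * rT))
    (c : ℕ → ℝ)
    (hc : ∀ n, c n = lam n * (Real.sin (lam n * rT) / (lam n * rT)) /
          (2 * lam n * rT - Real.sin (2 * lam n * rT)))
    (hsum : Summable fun n => |c n|)
    (fc1 : ℝ → ℝ)
    (hfc1 : ∀ t, fc1 t = C * ∑' n, c n * (1 - Real.exp (-(Dv * lam n ^ 2 * t))))
    (fc2 : ℝ → ℝ)
    (hfc2 : ∀ t, fc2 t = C * ∑' n, c n *
          (Real.exp (-(Dv * lam n ^ 2 * (t - τ))) - Real.exp (-(Dv * lam n ^ 2 * t))))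
    :
    (∀ t, 0 < t → t < τ → HasDerivAt fc1
        (4 * rT ^ 2 * kf * μ / Nv * ∑' n, c n * lam n ^ 2 * Real.exp (-(Dv * lam n ^ 2 * t))) t) ∧
    (∀ t, τ < t → HasDerivAt fc2
        (4 * rT ^ 2 * kf * μ / Nv * ∑' n, c n * lam n ^ 2 *
          (Real.exp (-(Dv * lam n ^ 2 * t)) - Real.exp (-(Dv * lam n ^ 2 * (t - τ))))) t) :=
  stmt_11_general rT kf μ Nv Dv hμ hNv hDv τ hτ C hCdef lam c hsum fc1 hfc1 fc2 hfc2
end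

section
/- For all 0 < r_T < r_0, r_R > 0, D_σ > 0, k_d ≥ 0 and t > 0, the surface average of P_α over the transmitter sphere evaluates in closed form: (1/(2 r_T)) ∫_{−r_T}^{r_T} P_α(√(r_T² + r_0² − 2 r_0 x), t) dx = (1/(8 r_0 r_T)) [ξ₁(r_0 − r_T, t) + ξ₁(r_T − r_0, t) − ξ₁(r_0 + r_T, t) − ξ₁(−r_0 − r_T, t)] + (D_σ t/(2 r_T r_0)) [ξ₂(r_T + r_0, t) + ξ₂(−r_T − r_0, t) − ξ₂(r_0 − r_T, t) − ξ₂(r_T − r_0, t)]. (Lemma 2, the received signal P_u(t) for uniform simultaneous release from the TX membrane.) -/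
/-!
Substituting ρ = √(r_T² + r_0² − 2 r_0 x), so that ρ dρ = −r_0 dx, turns the average into
(1 / (2 r_T r_0)) ∫ ρ P_α(ρ, t) dρ over [r_0 − r_T, r_0 + r_T]. With c = √(4 D_σ t) and
h(z) = (z/2) erf((r_R + z)/c) + c/(2√π) exp(−(r_R + z)²/c²) one has
ρ P_α(ρ, t) = e^{−k_d t} (h(ρ) − h(−ρ)), so e^{−k_d t} (H(z) + H(−z)) is a primitive of ρ P_α
whenever H' = h. Integrating by parts with erf' = (2/√π) exp(−x²) gives the elementary
primitive H = `erfShiftPrimitive r_R c`, and e^{−k_d t} (H(z) + H(−z)) is exactly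
−¼ (ξ₁(z) + ξ₁(−z)) + D_σ t (ξ₂(z) + ξ₂(−z)).
-/

open MeasureTheory Filter Topology

open Real Set

noncomputable def erfShiftPrimitive (a c z : ℝ) : ℝ :=
  ((z ^ 2 - a ^ 2) / 4 + c ^ 2 / 8) * erf ((a + z) / c) +
    c * (z - a) / (4 * √π) * exp (-((a + z) ^ 2 / c ^ 2))

theorem hasDerivAt_erfShiftPrimitive (a : ℝ) {c : ℝ} (hc : c ≠ 0) (z : ℝ) :
    HasDerivAt (erfShiftPrimitive a c)
      (z / 2 * erf ((a + z) / c) + c / (2 * √π) * exp (-((a + z) ^ 2 / c ^ 2))) z := by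
  have hu : HasDerivAt (fun w => (a + w) / c) (1 / c) z :=
    ((hasDerivAt_id z).const_add a).div_const c
  have hE := (hasDerivAt_erf ((a + z) / c)).comp z hu
  have hX : HasDerivAt (fun w => exp (-((a + w) ^ 2 / c ^ 2)))
      (exp (-((a + z) ^ 2 / c ^ 2)) * (-(2 * (a + z)) / c ^ 2)) z := by
    have hs : HasDerivAt (fun w => -((a + w) ^ 2 / c ^ 2)) (-(2 * (a + z)) / c ^ 2) z := by
      refine ((((hasDerivAt_id z).const_add a).pow 2).div_const (c ^ 2)).neg.congr_deriv ?_
      simp only [id]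
      ring
    exact hs.exp
  have hA : HasDerivAt (fun w : ℝ => (w ^ 2 - a ^ 2) / 4 + c ^ 2 / 8) (z / 2) z := by
    refine ((((hasDerivAt_pow 2 z).sub_const (a ^ 2)).div_const 4).add_const _).congr_deriv ?_
    ring
  have hB : HasDerivAt (fun w : ℝ => c * (w - a) / (4 * √π)) (c / (4 * √π)) z := by
    simpa using (((hasDerivAt_id z).sub_const a).const_mul c).div_const (4 * √π)
  refine ((hA.mul hE).add (hB.mul hX)).congr_deriv ?_
  rw [div_pow, Function.comp_apply]
  field_simp
  ring

theorem hasDerivAt_erfShiftPrimitive_add_comp_neg (a : ℝ) {c : ℝ} (hc : c ≠ 0) (z : ℝ) :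
    HasDerivAt (fun w => erfShiftPrimitive a c w + erfShiftPrimitive a c (-w))
      (z / 2 * (erf ((a - z) / c) + erf ((a + z) / c)) +
        c / (2 * √π) * (exp (-((a + z) ^ 2 / c ^ 2)) - exp (-((a - z) ^ 2 / c ^ 2)))) z := by
  refine ((hasDerivAt_erfShiftPrimitive a hc z).add
    ((hasDerivAt_erfShiftPrimitive a hc (-z)).comp z (hasDerivAt_neg z))).congr_deriv ?_
  simp only [← sub_eq_add_neg]
  ring

theorem integral_comp_sqrt_sq_add_sq_sub_mul {f G : ℝ → ℝ} {r R : ℝ} (hr : 0 ≤ r) (hrR : r < R)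
    (hf : ContinuousOn f (Icc (R - r) (R + r)))
    (hG : ∀ z ∈ Icc (R - r) (R + r), HasDerivAt G (z * f z) z) :
    ∫ x in (-r)..r, f √(r ^ 2 + R ^ 2 - 2 * R * x) = (G (R + r) - G (R - r)) / R := by
  have hR : 0 < R := hr.trans_lt hrR
  have hmaps : MapsTo (fun x => √(r ^ 2 + R ^ 2 - 2 * R * x)) (uIcc (-r) r)
      (Icc (R - r) (R + r)) := by
    intro x hx
    rw [uIcc_of_le (by linarith)] at hx
    constructor
    · rw [le_sqrt' (by linarith)]
      nlinarith [mul_nonneg hR.le (sub_nonneg.2 hx.2)]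
    · rw [sqrt_le_left (by linarith)]
      nlinarith [mul_nonneg hR.le (neg_le_iff_add_nonneg.1 hx.1)]
  have hderiv : ∀ x ∈ uIcc (-r) r, HasDerivAt (fun x => -G √(r ^ 2 + R ^ 2 - 2 * R * x) / R)
      (f √(r ^ 2 + R ^ 2 - 2 * R * x)) x := by
    intro x hx
    have hρ : 0 < √(r ^ 2 + R ^ 2 - 2 * R * x) := by linarith [(hmaps hx).1]
    have hq : HasDerivAt (fun x => r ^ 2 + R ^ 2 - 2 * R * x) (-(2 * R)) x := by
      simpa using ((hasDerivAt_id x).const_mul (2 * R)).const_sub (r ^ 2 + R ^ 2)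
    have hcomp := ((hG _ (hmaps hx)).comp x (hq.sqrt (sqrt_pos.1 hρ).ne')).neg.div_const R
    refine hcomp.congr_deriv ?_
    beta_reduce
    generalize √(r ^ 2 + R ^ 2 - 2 * R * x) = ρ at hρ ⊢
    field_simp
  have hint : IntervalIntegrable (fun x => f √(r ^ 2 + R ^ 2 - 2 * R * x)) volume (-r) r :=
    (hf.comp (by fun_prop) hmaps).intervalIntegrable
  rw [intervalIntegral.integral_eq_sub_of_hasDerivAt hderiv hint,
    show r ^ 2 + R ^ 2 - 2 * R * r = (R - r) ^ 2 by ring,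
    show r ^ 2 + R ^ 2 - 2 * R * -r = (R + r) ^ 2 by ring,
    sqrt_sq (by linarith), sqrt_sq (by linarith)]
  ring

noncomputable def Palpha (rR Dσ kd ρ s : ℝ) : ℝ :=
  1 / 2 * (erf ((rR - ρ) / √(4 * Dσ * s)) + erf ((rR + ρ) / √(4 * Dσ * s))) * exp (-(kd * s)) +
    1 / ρ * √(Dσ * s / π) *
      (exp (-((rR + ρ) ^ 2 / (4 * Dσ * s)) - kd * s) -
        exp (-((rR - ρ) ^ 2 / (4 * Dσ * s)) - kd * s))

noncomputable def xi1 (rR Dσ kd z s : ℝ) : ℝ :=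
  exp (-((rR - z) ^ 2 / (4 * Dσ * s)) - kd * s) * (rR + z) * √(4 * Dσ * s / π) +
    (rR ^ 2 + 2 * Dσ * s - z ^ 2) * erf ((rR - z) / √(4 * Dσ * s)) * exp (-(kd * s))

noncomputable def xi2 (rR Dσ kd z s : ℝ) : ℝ :=
  erf ((rR + z) / √(4 * Dσ * s)) * exp (-(kd * s))

noncomputable def xiPrimitive (rR Dσ kd z s : ℝ) : ℝ :=
  -(1 / 4) * (xi1 rR Dσ kd z s + xi1 rR Dσ kd (-z) s) +
    Dσ * s * (xi2 rR Dσ kd z s + xi2 rR Dσ kd (-z) s)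

section Profile

variable (rR : ℝ) {Dσ : ℝ} (kd : ℝ) {s c : ℝ}

theorem continuousAt_Palpha {ρ : ℝ} (hρ : ρ ≠ 0) :
    ContinuousAt (fun z => Palpha rR Dσ kd z s) ρ := by
  unfold Palpha
  fun_prop (disch := exact hρ)

variable (hc : 0 < c) (hc2 : 4 * Dσ * s = c ^ 2)
include hc hc2

theorem mul_Palpha_eq (ρ : ℝ) :
    ρ * Palpha rR Dσ kd ρ s = exp (-(kd * s)) *
      (ρ / 2 * (erf ((rR - ρ) / c) + erf ((rR + ρ) / c)) +
        c / (2 * √π) * (exp (-((rR + ρ) ^ 2 / c ^ 2)) - exp (-((rR - ρ) ^ 2 / c ^ 2)))) := by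
  rcases eq_or_ne ρ 0 with rfl | hρ
  · simp
  have hsqrt : √(Dσ * s / π) = c / (2 * √π) := by
    rw [show Dσ * s / π = (c / (2 * √π)) ^ 2 by
      rw [div_pow, mul_pow, sq_sqrt pi_pos.le, ← hc2]; ring, sqrt_sq (by positivity)]
  simp only [Palpha, hc2, sqrt_sq hc.le, hsqrt, exp_sub, exp_neg]
  field_simp

theorem xiPrimitive_eq (z : ℝ) :
    xiPrimitive rR Dσ kd z s =
      exp (-(kd * s)) * (erfShiftPrimitive rR c z + erfShiftPrimitive rR c (-z)) := by
  have hsqrt : √(c ^ 2 / π) = c / √π := by rw [sqrt_div' _ pi_pos.le, sqrt_sq hc.le]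
  simp only [xiPrimitive, xi1, xi2, erfShiftPrimitive, hc2, sqrt_sq hc.le, hsqrt,
    exp_sub, exp_neg, sub_neg_eq_add, ← sub_eq_add_neg, neg_sq]
  rw [show 2 * Dσ * s = c ^ 2 / 2 by linarith, show Dσ * s = c ^ 2 / 4 by linarith]
  field_simp
  ring

theorem hasDerivAt_xiPrimitive (z : ℝ) :
    HasDerivAt (fun w => xiPrimitive rR Dσ kd w s) (z * Palpha rR Dσ kd z s) z := by
  simp only [xiPrimitive_eq rR kd hc hc2, mul_Palpha_eq rR kd hc hc2]
  exact (hasDerivAt_erfShiftPrimitive_add_comp_neg rR hc.ne' z).const_mul _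

end Profile

theorem stmt_13_general (rT r0 rR Dσ kd t : ℝ)
    (hrT : 0 < rT) (hr : rT < r0) (hD : 0 < Dσ) (ht : 0 < t)
    (Pα : ℝ → ℝ → ℝ)
    (hPα : ∀ ρ s, 0 < ρ → 0 < s → Pα ρ s =
      1 / 2 * (erf ((rR - ρ) / Real.sqrt (4 * Dσ * s)) +
          erf ((rR + ρ) / Real.sqrt (4 * Dσ * s))) * Real.exp (-(kd * s)) +
        1 / ρ * Real.sqrt (Dσ * s / Real.pi) *
          (Real.exp (-((rR + ρ) ^ 2 / (4 * Dσ * s)) - kd * s) -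
            Real.exp (-((rR - ρ) ^ 2 / (4 * Dσ * s)) - kd * s)))
    (ξ1 ξ2 : ℝ → ℝ → ℝ)
    (hξ1 : ∀ z s, ξ1 z s =
      Real.exp (-((rR - z) ^ 2 / (4 * Dσ * s)) - kd * s) * (rR + z) *
          Real.sqrt (4 * Dσ * s / Real.pi) +
        (rR ^ 2 + 2 * Dσ * s - z ^ 2) * erf ((rR - z) / Real.sqrt (4 * Dσ * s)) *
          Real.exp (-(kd * s)))
    (hξ2 : ∀ z s, ξ2 z s = erf ((rR + z) / Real.sqrt (4 * Dσ * s)) * Real.exp (-(kd * s))) :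
    1 / (2 * rT) * ∫ x in (-rT)..rT, Pα (Real.sqrt (rT ^ 2 + r0 ^ 2 - 2 * r0 * x)) t =
      1 / (8 * r0 * rT) *
          (ξ1 (r0 - rT) t + ξ1 (rT - r0) t - ξ1 (r0 + rT) t - ξ1 (-r0 - rT) t) +
        Dσ * t / (2 * rT * r0) *
          (ξ2 (rT + r0) t + ξ2 (-rT - r0) t - ξ2 (r0 - rT) t - ξ2 (rT - r0) t) := by
  set c := √(4 * Dσ * t)
  have hc : 0 < c := sqrt_pos.2 (by positivity)
  have hc2 : 4 * Dσ * t = c ^ 2 := (sq_sqrt (by positivity)).symm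
  obtain rfl : ξ1 = xi1 rR Dσ kd := funext₂ hξ1
  obtain rfl : ξ2 = xi2 rR Dσ kd := funext₂ hξ2
  have hpos : ∀ z ∈ Icc (r0 - rT) (r0 + rT), 0 < z := fun z hz => by linarith [hz.1]
  have hP : ∀ z ∈ Icc (r0 - rT) (r0 + rT), Pα z t = Palpha rR Dσ kd z t :=
    fun z hz => hPα z t (hpos z hz) ht
  have hcont : ContinuousOn (Pα · t) (Icc (r0 - rT) (r0 + rT)) :=
    ContinuousOn.congr (f := (Palpha rR Dσ kd · t))
      (fun z hz => (continuousAt_Palpha rR kd (hpos z hz).ne').continuousWithinAt) hP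
  rw [integral_comp_sqrt_sq_add_sq_sub_mul hrT.le hr hcont
    fun z hz => hP z hz ▸ hasDerivAt_xiPrimitive rR kd hc hc2 z]
  simp only [xiPrimitive]
  rw [show rT - r0 = -(r0 - rT) by ring, show -r0 - rT = -(r0 + rT) by ring,
    show -rT - r0 = -(r0 + rT) by ring, add_comm rT r0]
  field_simp
  ring

theorem stmt_13 (rT r0 rR Dσ kd t : ℝ)
    (hrT : 0 < rT) (hr : rT < r0) (hrR : 0 < rR) (hD : 0 < Dσ) (hkd : 0 ≤ kd) (ht : 0 < t)
    (Pα : ℝ → ℝ → ℝ)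
    (hPα : ∀ ρ s, 0 < ρ → 0 < s → Pα ρ s =
      1 / 2 * (erf ((rR - ρ) / Real.sqrt (4 * Dσ * s)) +
          erf ((rR + ρ) / Real.sqrt (4 * Dσ * s))) * Real.exp (-(kd * s)) +
        1 / ρ * Real.sqrt (Dσ * s / Real.pi) *
          (Real.exp (-((rR + ρ) ^ 2 / (4 * Dσ * s)) - kd * s) -
            Real.exp (-((rR - ρ) ^ 2 / (4 * Dσ * s)) - kd * s)))
    (ξ1 ξ2 : ℝ → ℝ → ℝ)
    (hξ1 : ∀ z s, ξ1 z s =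
      Real.exp (-((rR - z) ^ 2 / (4 * Dσ * s)) - kd * s) * (rR + z) *
          Real.sqrt (4 * Dσ * s / Real.pi) +
        (rR ^ 2 + 2 * Dσ * s - z ^ 2) * erf ((rR - z) / Real.sqrt (4 * Dσ * s)) *
          Real.exp (-(kd * s)))
    (hξ2 : ∀ z s, ξ2 z s = erf ((rR + z) / Real.sqrt (4 * Dσ * s)) * Real.exp (-(kd * s))) :
    1 / (2 * rT) * ∫ x in (-rT)..rT, Pα (Real.sqrt (rT ^ 2 + r0 ^ 2 - 2 * r0 * x)) t =
      1 / (8 * r0 * rT) *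
          (ξ1 (r0 - rT) t + ξ1 (rT - r0) t - ξ1 (r0 + rT) t - ξ1 (-r0 - rT) t) +
        Dσ * t / (2 * rT * r0) *
          (ξ2 (rT + r0) t + ξ2 (-rT - r0) t - ξ2 (r0 - rT) t - ξ2 (rT - r0) t) :=
  stmt_13_general rT r0 rR Dσ kd t hrT hr hD ht Pα hPα ξ1 ξ2 hξ1 hξ2
end
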